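/- Let ε > 0, let n ≥ 1, let V be a type, and let f₁, …, fₙ : V → ℤ be functions (the index maps of n word lists). For μ ∈ ℤ let g_μ(x) = ((exp ε − 1)/(exp ε + 1)) · exp(−ε·|x − μ|). Define the multi-list mechanism mass m(w)(x) = (1/n) · ∑_{l=1}^{n} g_{f_l(w)}(x) (apply the geometric mechanism with each list and release the result of a uniformly chosen list). Then for all w, w' ∈ V and all x ∈ ℤ, m(w)(x) ≤ exp(ε · max_{1 ≤ l ≤ n} |f_l(w) − f_l(w')|) · m(w')(x). -/
import Mathlib


/-- The two-sided geometric (discrete Laplace) mass function centered at `μ`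
with privacy parameter `ε`. -/
noncomputable def geomMass (ε : ℝ) (μ x : ℤ) : ℝ :=
  ((Real.exp ε - 1) / (Real.exp ε + 1)) * Real.exp (-ε * ((|x - μ| : ℤ) : ℝ))

lemma geomMass_le (ε : ℝ) (hε : 0 < ε) (μ μ' x : ℤ) :
    geomMass ε μ x ≤ Real.exp (ε * ((|μ - μ'| : ℤ) : ℝ)) * geomMass ε μ' x := by
  unfold geomMass
  have hc : 0 ≤ (Real.exp ε - 1) / (Real.exp ε + 1) := by
    apply div_nonneg
    · linarith [Real.one_le_exp hε.le]
    · positivity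
  rw [mul_comm (Real.exp _), mul_assoc, ← Real.exp_add]
  apply mul_le_mul_of_nonneg_left _ hc
  apply Real.exp_le_exp.mpr
  have htri : (|x - μ| : ℤ) ≥ |x - μ'| - |μ - μ'| := by
    have := abs_sub_abs_le_abs_sub (x - μ') (x - μ)
    have h2 : (x - μ') - (x - μ) = μ - μ' := by ring
    rw [h2] at this
    linarith
  have : ((|x - μ'| : ℤ) : ℝ) - ((|μ - μ'| : ℤ) : ℝ) ≤ ((|x - μ| : ℤ) : ℝ) := by
    exact_mod_cast sub_le_iff_le_add.mpr (by exact_mod_cast sub_le_iff_le_add.mp htri)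
  nlinarith

/-- The multi-list mechanism (apply the geometric mechanism with each of the
`n` list index maps `f l` and release the output of a uniformly chosen list)
satisfies `ε·d_max`-privacy, where
`d_max(w, w') = max_l |f_l(w) − f_l(w')|`. -/
theorem multiList_privacy (ε : ℝ) (hε : 0 < ε) (n : ℕ) (hn : 0 < n)
    {V : Type*} (f : Fin n → V → ℤ) (w w' : V) (x : ℤ) :
    (1 / (n : ℝ)) * ∑ l : Fin n, geomMass ε (f l w) x ≤
      Real.exp (ε * ((Finset.univ.sup' ⟨⟨0, hn⟩, Finset.mem_univ _⟩
          (fun l : Fin n => |f l w - f l w'|) : ℤ) : ℝ)) *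
        ((1 / (n : ℝ)) * ∑ l : Fin n, geomMass ε (f l w') x) := by
  rw [← mul_assoc, mul_comm (Real.exp _) _, mul_assoc]
  apply mul_le_mul_of_nonneg_left _ (by positivity)
  rw [Finset.mul_sum]
  apply Finset.sum_le_sum
  intro l _
  calc geomMass ε (f l w) x
      ≤ Real.exp (ε * ((|f l w - f l w'| : ℤ) : ℝ)) * geomMass ε (f l w') x :=
        geomMass_le ε hε _ _ x
    _ ≤ _ := by
        apply mul_le_mul_of_nonneg_right
        · apply Real.exp_le_exp.mpr
          apply mul_le_mul_of_nonneg_left _ hε.le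
          exact_mod_cast Finset.le_sup' (fun l : Fin n => |f l w - f l w'|)
            (Finset.mem_univ l)
        · unfold geomMass
          have h1 : 1 ≤ Real.exp ε := Real.one_le_exp hε.le
          have : 0 ≤ (Real.exp ε - 1) / (Real.exp ε + 1) := by
            apply div_nonneg <;> linarith
          positivity
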